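/- The group with presentation ⟨a, b ; (ab⁻¹)³⟩ is isomorphic to the free product ℤ * ℤ/3ℤ, and hence the region core group RC of the example diagram, presented as ⟨A, B, C ; (BA⁻¹)³⟩, is isomorphic to ℤ * ℤ * ℤ/3ℤ. -/

import Mathlib

/-!
Substituting the generator `ω = BA⁻¹` for `B` (a Tietze transformation) turns the presentation
`⟨A, B, C ; (BA⁻¹)ⁿ⟩` into `⟨A, ω, C ; ωⁿ⟩`, which is the free product `ℤ * ℤ * ℤ/n` of the
cyclic groups generated by `A`, `C` and `ω`. Concretely, `A ↦ A`, `B ↦ ωA`, `C ↦ C` and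
`A ↦ A`, `C ↦ C`, `ω ↦ BA⁻¹` are mutually inverse homomorphisms.
-/

open Monoid Multiplicative

section ZModHom

variable {G : Type*} [Group G] {n : ℕ}

def zmodPowersHom (x : G) (hx : x ^ n = 1) : Multiplicative (ZMod n) →* G :=
  AddMonoidHom.toMultiplicativeLeft <|
    ZMod.lift n ⟨zmultiplesHom _ (Additive.ofMul x), by
      rw [zmultiplesHom_apply, natCast_zsmul, ← ofMul_pow, hx, ofMul_one]⟩

@[simp]
lemma zmodPowersHom_ofAdd_one (x : G) (hx : x ^ n = 1) : zmodPowersHom x hx (ofAdd 1) = x := by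
  simpa [zmodPowersHom] using
    congrArg Additive.toMul (ZMod.lift_coe n ⟨zmultiplesHom _ (Additive.ofMul x), _⟩ 1)

lemma MonoidHom.ext_mzmod {f g : Multiplicative (ZMod n) →* G}
    (h : f (ofAdd 1) = g (ofAdd 1)) : f = g := by
  have hcomp : f.comp (Int.castAddHom (ZMod n)).toMultiplicative =
      g.comp (Int.castAddHom (ZMod n)).toMultiplicative :=
    MonoidHom.ext_mint (by simpa using h)
  refine MonoidHom.ext fun m => ?_
  obtain ⟨k, hk⟩ := ZMod.intCast_surjective (toAdd m)
  rw [← ofAdd_toAdd m, ← hk]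
  exact DFunLike.congr_fun hcomp (ofAdd k)

end ZModHom

namespace RegionCoreGroup

variable (n : ℕ)

abbrev rels : Set (FreeGroup (Fin 3)) := {(FreeGroup.of 1 * (FreeGroup.of 0)⁻¹) ^ n}

abbrev FreeProd : Type :=
  Coprod (Coprod (Multiplicative ℤ) (Multiplicative ℤ)) (Multiplicative (ZMod n))

lemma pow_of_one_mul_inv_of_zero :
    (PresentedGroup.of 1 * (PresentedGroup.of 0)⁻¹ : PresentedGroup (rels n)) ^ n = 1 :=
  PresentedGroup.one_of_mem (Set.mem_singleton _)

def generatorImage : Fin 3 → FreeProd n :=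
  ![Coprod.inl (Coprod.inl (ofAdd 1)),
    Coprod.inr (ofAdd 1) * Coprod.inl (Coprod.inl (ofAdd 1)),
    Coprod.inl (Coprod.inr (ofAdd 1))]

lemma generatorImage_one_mul_inv_zero :
    generatorImage n 1 * (generatorImage n 0)⁻¹ = Coprod.inr (ofAdd 1) :=
  mul_inv_cancel_right (G := FreeProd n) _ _

lemma lift_generatorImage_rels : ∀ r ∈ rels n, FreeGroup.lift (generatorImage n) r = 1 := by
  rintro _ rfl
  rw [map_pow, map_mul, map_inv, FreeGroup.lift_apply_of, FreeGroup.lift_apply_of,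
    generatorImage_one_mul_inv_zero, ← map_pow, ← ofAdd_nsmul, nsmul_one, ZMod.natCast_self,
    ofAdd_zero, map_one]

def toFreeProd : PresentedGroup (rels n) →* FreeProd n :=
  PresentedGroup.toGroup (lift_generatorImage_rels n)

def ofFreeProd : FreeProd n →* PresentedGroup (rels n) :=
  Coprod.lift
    (Coprod.lift (zpowersHom _ (PresentedGroup.of 0)) (zpowersHom _ (PresentedGroup.of 2)))
    (zmodPowersHom _ (pow_of_one_mul_inv_of_zero n))

lemma ofFreeProd_comp_toFreeProd : (ofFreeProd n).comp (toFreeProd n) = .id _ := by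
  refine PresentedGroup.ext fun i => ?_
  fin_cases i <;> simp [toFreeProd, ofFreeProd, generatorImage]

lemma toFreeProd_comp_ofFreeProd : (toFreeProd n).comp (ofFreeProd n) = .id _ := by
  refine Coprod.hom_ext (Coprod.hom_ext ?_ ?_) ?_
  · exact MonoidHom.ext_mint (M := FreeProd n) (by simp [toFreeProd, ofFreeProd, generatorImage])
  · exact MonoidHom.ext_mint (M := FreeProd n) (by simp [toFreeProd, ofFreeProd, generatorImage])
  · exact MonoidHom.ext_mzmod (G := FreeProd n)
      (by simp [toFreeProd, ofFreeProd, generatorImage_one_mul_inv_zero])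

def mulEquivFreeProd : PresentedGroup (rels n) ≃* FreeProd n :=
  (toFreeProd n).toMulEquiv (ofFreeProd n) (ofFreeProd_comp_toFreeProd n)
    (toFreeProd_comp_ofFreeProd n)

end RegionCoreGroup

open FreeGroup in
/-- The region core group `⟨A, B, C ; (BA⁻¹)³⟩` of the example diagram is isomorphic to
`ℤ * ℤ * ℤ/3` (the free product of `⟨a, b ; (ab⁻¹)³⟩ ≅ ℤ * ℤ/3 with another `ℤ`). -/
theorem region_core_group_example :
    Nonempty
      (PresentedGroup ({(of (1 : Fin 3) * (of (0 : Fin 3))⁻¹) ^ 3} : Set (FreeGroup (Fin 3))) ≃*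
        Monoid.Coprod (Monoid.Coprod (Multiplicative ℤ) (Multiplicative ℤ))
          (Multiplicative (ZMod 3))) :=
  ⟨RegionCoreGroup.mulEquivFreeProd 3⟩
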